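/- arXiv:2101.08302 — 4 statements merged into one kernel-verified Lean document; each statement's English description precedes it below -/
import Mathlib

section
/- Let P and Q be orthomodular posets (quantum logics) and let φ : P → Q be a bijection such that for all a, b in P, a ⊥ b if and only if φ(a) ⊥ φ(b). Then φ is an order isomorphism and φ(a^⊥) = φ(a)^⊥ for all a ∈ P. -/
/-- An orthomodular poset (quantum logic): bounded poset with orthocomplementation. -/
structure QuantumLogic (P : Type*) [PartialOrder P] [OrderBot P] [OrderTop P] where
  compl : P → P
  compl_antitone : ∀ a b : P, a ≤ b → compl b ≤ compl a
  compl_compl : ∀ a : P, compl (compl a) = a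
  isGLB_compl : ∀ a : P, IsGLB {a, compl a} ⊥
  isLUB_compl : ∀ a : P, IsLUB {a, compl a} ⊤
  sup_of_ortho : ∀ a b : P, a ≤ compl b → ∃ c, IsLUB {a, b} c
  orthomodular : ∀ a b : P, a ≤ b → ∃ c, IsGLB {b, compl a} c ∧ IsLUB {a, c} b

/-!
For an antitone involution `c`, such as an orthocomplementation, the order is recovered from
orthogonality: `a ≤ b` iff everything orthogonal to `b` is orthogonal to `a`, and `c a` is the
largest element orthogonal to `a`. A surjection preserving and reflecting
orthogonality therefore preserves and reflects both descriptions.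
-/

open Function

section AntitoneInvolution

theorem le_iff_forall_le_compl_imp {P : Type*} [Preorder P] {c : P → P} (hc : Antitone c)
    (hc' : Involutive c) {a b : P} : a ≤ b ↔ ∀ x, x ≤ c b → x ≤ c a := by
  refine ⟨fun hab x hx => hx.trans (hc hab), fun h => ?_⟩
  rw [← hc' a, ← hc' b]
  exact hc (h (c b) le_rfl)

variable {P Q : Type*} [Preorder P] [PartialOrder Q] {cP : P → P} {cQ : Q → Q} {φ : P → Q}

theorem le_iff_le_of_surjective_of_ortho (hcP : Antitone cP) (hcP' : Involutive cP)
    (hcQ : Antitone cQ) (hcQ' : Involutive cQ) (hφ : Surjective φ)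
    (hortho : ∀ a b, a ≤ cP b ↔ φ a ≤ cQ (φ b)) (a b : P) : a ≤ b ↔ φ a ≤ φ b := by
  rw [le_iff_forall_le_compl_imp hcP hcP', le_iff_forall_le_compl_imp hcQ hcQ', hφ.forall]
  simp only [hortho]

theorem map_compl_of_surjective_of_ortho (hcP : Antitone cP) (hcP' : Involutive cP)
    (hcQ : Antitone cQ) (hcQ' : Involutive cQ) (hφ : Surjective φ)
    (hortho : ∀ a b, a ≤ cP b ↔ φ a ≤ cQ (φ b)) (a : P) : φ (cP a) = cQ (φ a) := by
  refine eq_of_forall_le_iff fun y => ?_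
  obtain ⟨x, rfl⟩ := hφ y
  rw [← le_iff_le_of_surjective_of_ortho hcP hcP' hcQ hcQ' hφ hortho, hortho]

end AntitoneInvolution

namespace QuantumLogic

variable {P : Type*} [PartialOrder P] [OrderBot P] [OrderTop P] (L : QuantumLogic P)

theorem antitone_compl : Antitone L.compl := L.compl_antitone

theorem involutive_compl : Involutive L.compl := L.compl_compl

end QuantumLogic

/-- A bijection between quantum logics preserving orthogonality (`a ⊥ b` iff `a ≤ b^⊥`)
in both directions is an order isomorphism and preserves orthocomplements. -/
theorem orthoisomorphism_is_order_isomorphism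
    {P Q : Type*} [PartialOrder P] [OrderBot P] [OrderTop P]
    [PartialOrder Q] [OrderBot Q] [OrderTop Q]
    (LP : QuantumLogic P) (LQ : QuantumLogic Q) (φ : P → Q)
    (hbij : Function.Bijective φ)
    (hortho : ∀ a b : P, a ≤ LP.compl b ↔ φ a ≤ LQ.compl (φ b)) :
    (∀ a b : P, a ≤ b ↔ φ a ≤ φ b) ∧ (∀ a : P, φ (LP.compl a) = LQ.compl (φ a)) :=
  ⟨le_iff_le_of_surjective_of_ortho LP.antitone_compl LP.involutive_compl LQ.antitone_compl
      LQ.involutive_compl hbij.surjective hortho,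
    map_compl_of_surjective_of_ortho LP.antitone_compl LP.involutive_compl LQ.antitone_compl
      LQ.involutive_compl hbij.surjective hortho⟩
end

section
/- Let u and v be partial isometries in a unital C*-algebra A (i.e., u u* u = u and v v* v = v). If {v, v, u} = 0, where {a, b, c} = (a b* c + c b* a)/2, then v* u = 0 and u v* = 0. Conversely, if v* u = 0 and u v* = 0 then {v, v, u} = 0. -/
/-!
With `p = v v*` and `q = v* v`, which are idempotent because `v` is a partial isometry,
`{v, v, u} = 0` says `p u + u q = 0`. Multiplying by `p` on the left and by `q` on the right
gives `p u = -p u q = u q`, so `2 p u = 0`, and hence `p u = u q = 0`. Finally `v* u = 0 ↔ p u = 0`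
and `u v* = 0 ↔ u q = 0`, because `v* = v* v v*`.
-/

namespace IsIdempotentElem

variable {R : Type*} [Ring R]

theorem mul_eq_zero_and_mul_eq_zero_of_mul_add_mul_eq_zero [IsAddTorsionFree R] {p q x : R}
    (hp : IsIdempotentElem p) (hq : IsIdempotentElem q) (h : p * x + x * q = 0) :
    p * x = 0 ∧ x * q = 0 := by
  have hleft : p * x + p * x * q = 0 := by
    simpa [mul_add, ← mul_assoc, hp.eq] using congr(p * $h)
  have hright : p * x * q + x * q = 0 := by
    simpa [add_mul, mul_assoc, hq.eq] using congr($h * q)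
  have hsymm : p * x = x * q := by
    rw [eq_neg_of_add_eq_zero_left hleft, eq_neg_of_add_eq_zero_right hright]
  have hpx : p * x = 0 := by
    rw [← nsmul_right_inj (M := R) two_ne_zero, two_nsmul, smul_zero]
    nth_rewrite 2 [hsymm]
    exact h
  exact ⟨hpx, hsymm ▸ hpx⟩

end IsIdempotentElem

section PartialIsometry

variable {R : Type*} [Ring R] [StarRing R] {v : R}

theorem star_mul_mul_star_self (hv : v * star v * v = v) : star v * v * star v = star v := by
  simpa [mul_assoc] using congr(star $hv)

theorem isIdempotentElem_mul_star_self (hv : v * star v * v = v) :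
    IsIdempotentElem (v * star v) := by
  rw [IsIdempotentElem, ← mul_assoc, hv]

theorem isIdempotentElem_star_mul_self (hv : v * star v * v = v) :
    IsIdempotentElem (star v * v) := by
  rw [IsIdempotentElem, ← mul_assoc, star_mul_mul_star_self hv]

theorem star_mul_eq_zero_iff_mul_star_mul_eq_zero (hv : v * star v * v = v) (x : R) :
    star v * x = 0 ↔ v * star v * x = 0 := by
  refine ⟨fun h => by rw [mul_assoc, h, mul_zero], fun h => ?_⟩
  rw [← star_mul_mul_star_self hv, mul_assoc, mul_assoc, ← mul_assoc v, h, mul_zero]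

theorem mul_star_eq_zero_iff_mul_star_mul_eq_zero (hv : v * star v * v = v) (x : R) :
    x * star v = 0 ↔ x * (star v * v) = 0 := by
  refine ⟨fun h => by rw [← mul_assoc, h, zero_mul], fun h => ?_⟩
  rw [← star_mul_mul_star_self hv, ← mul_assoc, h, zero_mul]

end PartialIsometry

theorem tripotent_orthogonal_iff_double_orthogonal_general
    {A : Type*} [NormedRing A] [StarRing A]
    [NormedAlgebra ℂ A]
    (u v : A) (hv : v * star v * v = v) :
    (2⁻¹ : ℂ) • (v * star v * u + u * star v * v) = 0 ↔
      star v * u = 0 ∧ u * star v = 0 := by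
  have : IsAddTorsionFree A := .of_isTorsionFree ℂ A
  rw [smul_eq_zero_iff_right (inv_ne_zero two_ne_zero), mul_assoc u,
    star_mul_eq_zero_iff_mul_star_mul_eq_zero hv, mul_star_eq_zero_iff_mul_star_mul_eq_zero hv]
  refine ⟨(isIdempotentElem_mul_star_self hv).mul_eq_zero_and_mul_eq_zero_of_mul_add_mul_eq_zero
    (isIdempotentElem_star_mul_self hv), fun h => ?_⟩
  rw [h.1, h.2, add_zero]

/-- For partial isometries `u, v` in a unital C*-algebra, `{v, v, u} = 0`
(with triple product `{a,b,c} = (a b* c + c b* a)/2`) if and only if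
`v* u = 0` and `u v* = 0` (double orthogonality). -/
theorem tripotent_orthogonal_iff_double_orthogonal
    {A : Type*} [NormedRing A] [StarRing A] [CStarRing A]
    [NormedAlgebra ℂ A] [StarModule ℂ A] [CompleteSpace A]
    (u v : A) (hu : u * star u * u = u) (hv : v * star v * v = v) :
    (2⁻¹ : ℂ) • (v * star v * u + u * star v * v) = 0 ↔
      star v * u = 0 ∧ u * star v = 0 :=
  tripotent_orthogonal_iff_double_orthogonal_general u v hv
end

section
/- Let M be a von Neumann algebra and u, v partial isometries with u ≤ v in the tripotent order (i.e., u = u v* u = u u* v). Then the map q ↦ q v is an order isomorphism from the set of projections q ≤ u u* (sub-projections of the final projection of u) onto the set of tripotents w with w ≤ u, ordered by the tripotent order. -/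
/-!
Put `p = u u*`. Since `u = p v`, every projection `q ≤ p` satisfies `q v = q u`, and
`(q u)(q u)* = q p q = q`; so `q ↦ q v` has the left inverse `w ↦ w w*`. Both the tripotent
order and the projection order then reduce to the single relation `q q' = q`. Surjectivity
needs the C⋆-identity once: for a tripotent `w ≤ u` the projection `q = w w*` satisfies
`q p q = q`, and `‖q - q p‖² = ‖q - q p q‖ = 0`.
-/

/-- A tripotent (partial isometry). -/
def IsTripotent {A : Type*} [Ring A] [StarRing A] (u : A) : Prop := u * star u * u = u

/-- The tripotent order: `u ≤ v` iff `u = u v* u = u u* v`. -/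
def TripLe {A : Type*} [Ring A] [StarRing A] (u v : A) : Prop :=
  u = u * star v * u ∧ u = u * star u * v

/-- A projection: self-adjoint idempotent. -/
def IsProjection {A : Type*} [Ring A] [StarRing A] (p : A) : Prop :=
  IsIdempotentElem p ∧ IsSelfAdjoint p

theorem isProjection_iff_isStarProjection {R : Type*} [Ring R] [StarRing R] {p : R} :
    IsProjection p ↔ IsStarProjection p :=
  (isStarProjection_iff p).symm

theorem IsSelfAdjoint.mul_eq_left_iff_mul_eq_right {R : Type*} [Mul R] [StarMul R] {a b : R}
    (ha : IsSelfAdjoint a) (hb : IsSelfAdjoint b) : a * b = a ↔ b * a = a := by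
  rw [← star_inj, star_mul, ha.star_eq, hb.star_eq]

section Tripotent

variable {R : Type*} [Ring R] [StarRing R] {u v w q q' : R}

theorem IsTripotent.isStarProjection_mul_star (hu : IsTripotent u) :
    IsStarProjection (u * star u) where
  isIdempotentElem := by
    rw [IsIdempotentElem, ← mul_assoc, (hu : u * star u * u = u)]
  isSelfAdjoint := by
    rw [IsSelfAdjoint, star_mul, star_star]

theorem TripLe.mul_star_mul_eq (huv : TripLe u v) : u * star u * v = u :=
  huv.2.symm

theorem TripLe.mul_eq_mul_of_mul_mul_star_eq (huv : TripLe u v) (hq : q * (u * star u) = q) :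
    q * v = q * u :=
  calc q * v = q * (u * star u) * v := by rw [hq]
    _ = q * u := by rw [mul_assoc, huv.mul_star_mul_eq]

theorem IsStarProjection.mul_mul_star_eq (hq : IsStarProjection q) (hqu : q * (u * star u) = q) :
    q * u * star (q * u) = q := by
  rw [star_mul, hq.isSelfAdjoint.star_eq, mul_assoc, ← mul_assoc u, ← mul_assoc q, hqu,
    hq.isIdempotentElem.eq]

theorem IsStarProjection.isTripotent_mul (hq : IsStarProjection q) (hqu : q * (u * star u) = q) :
    IsTripotent (q * u) := by
  rw [IsTripotent, hq.mul_mul_star_eq hqu, ← mul_assoc, hq.isIdempotentElem.eq]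

theorem IsStarProjection.tripLe_mul (hq : IsStarProjection q) (hqu : q * (u * star u) = q) :
    TripLe (q * u) u := by
  refine ⟨?_, by rw [hq.mul_mul_star_eq hqu]⟩
  calc q * u = q * q * u := by rw [hq.isIdempotentElem.eq]
    _ = q * (u * star u) * (q * u) := by rw [hqu, mul_assoc]
    _ = q * u * star u * (q * u) := by simp only [mul_assoc]

theorem IsStarProjection.tripLe_mul_iff (hq : IsStarProjection q) (hqu : q * (u * star u) = q)
    (hq' : IsStarProjection q') (hq'u : q' * (u * star u) = q') :
    TripLe (q * u) (q' * u) ↔ q * q' = q := by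
  have h₁ : q * u * star (q' * u) * (q * u) = q * q' * q * u := by
    calc q * u * star (q' * u) * (q * u) = q * (u * star u) * q' * q * u := by
          rw [star_mul, hq'.isSelfAdjoint.star_eq]; simp only [mul_assoc]
      _ = q * q' * q * u := by rw [hqu]
  have h₂ : q * u * star (q * u) * (q' * u) = q * q' * u := by
    rw [hq.mul_mul_star_eq hqu, mul_assoc]
  rw [TripLe, h₁, h₂]
  constructor
  · rintro ⟨-, h⟩
    calc q * q' = q * q' * (u * star u) := by rw [mul_assoc, hq'u]
      _ = q * (u * star u) := by rw [← mul_assoc (q * q'), ← h, mul_assoc]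
      _ = q := hqu
  · intro hqq'
    have hq'q : q' * q = q :=
      (hq.isSelfAdjoint.mul_eq_left_iff_mul_eq_right hq'.isSelfAdjoint).mp hqq'
    rw [mul_assoc q q', hq'q, hq.isIdempotentElem.eq, hqq']
    exact ⟨rfl, rfl⟩

theorem TripLe.mul_star_sandwich_eq (hwu : TripLe w u) :
    w * star w * (u * star u) * (w * star w) = w * star w :=
  calc w * star w * (u * star u) * (w * star w) = w * star w * u * star (w * star w * u) := by
        simp only [star_mul, star_star, mul_assoc]
    _ = w * star w := by rw [hwu.mul_star_mul_eq]

end Tripotent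

theorem IsStarProjection.mul_eq_left_of_mul_mul_eq {E : Type*} [NonUnitalNormedRing E]
    [StarRing E] [CStarRing E] {p q : E} (hq : IsStarProjection q) (hp : IsStarProjection p)
    (h : q * p * q = q) : q * p = q := by
  have hq2 := hq.isIdempotentElem.eq
  have hp2 := hp.isIdempotentElem.eq
  have : (q - q * p) * star (q - q * p) = 0 := by
    rw [star_sub, star_mul, hq.isSelfAdjoint.star_eq, hp.isSelfAdjoint.star_eq]
    calc (q - q * p) * (q - p * q) = q * q - q * p * q - q * p * q + q * (p * p) * q := by
          noncomm_ring
      _ = 0 := by rw [hq2, hp2, h]; abel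
  exact (sub_eq_zero.mp ((CStarRing.mul_star_self_eq_zero_iff _).mp this)).symm

theorem StarSubalgebra.le_iff_mul_eq_left_of_isStarProjection {A : Type*} [CStarAlgebra A]
    [PartialOrder A] [StarOrderedRing A] {S : StarSubalgebra ℂ A} {p q : S}
    (hp : IsStarProjection p) (hq : IsStarProjection q) : p ≤ q ↔ p * q = p := by
  rw [← Subtype.coe_le_coe, Subtype.ext_iff]
  exact IsStarProjection.le_iff_mul_eq_left (hp.map S.subtype) (hq.map S.subtype)

theorem interval_order_iso_final_projection_general
    {H : Type*} [NormedAddCommGroup H] [InnerProductSpace ℂ H] [CompleteSpace H]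
    (M : VonNeumannAlgebra H) (u v : M.toStarSubalgebra)
    (hu : IsTripotent u) (huv : TripLe u v) :
    (∀ q : M.toStarSubalgebra, IsProjection q → q ≤ u * star u →
        IsTripotent (q * v) ∧ TripLe (q * v) u) ∧
    (∀ q q' : M.toStarSubalgebra, IsProjection q → q ≤ u * star u →
        IsProjection q' → q' ≤ u * star u → (q ≤ q' ↔ TripLe (q * v) (q' * v))) ∧
    (∀ w : M.toStarSubalgebra, IsTripotent w → TripLe w u →
        ∃ q : M.toStarSubalgebra, IsProjection q ∧ q ≤ u * star u ∧ w = q * v) := by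
  have hp : IsStarProjection (u * star u) := hu.isStarProjection_mul_star
  have le_final : ∀ q, IsStarProjection q → (q ≤ u * star u ↔ q * (u * star u) = q) :=
    fun q hq ↦ StarSubalgebra.le_iff_mul_eq_left_of_isStarProjection hq hp
  simp only [isProjection_iff_isStarProjection]
  refine ⟨fun q hq hqp ↦ ?_, fun q q' hq hqp hq' hq'p ↦ ?_, fun w hw hwu ↦ ?_⟩
  · rw [le_final q hq] at hqp
    rw [huv.mul_eq_mul_of_mul_mul_star_eq hqp]
    exact ⟨hq.isTripotent_mul hqp, hq.tripLe_mul hqp⟩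
  · rw [le_final q hq] at hqp
    rw [le_final q' hq'] at hq'p
    rw [huv.mul_eq_mul_of_mul_mul_star_eq hqp, huv.mul_eq_mul_of_mul_mul_star_eq hq'p,
      hq.tripLe_mul_iff hqp hq' hq'p, StarSubalgebra.le_iff_mul_eq_left_of_isStarProjection hq hq']
  · have hq : IsStarProjection (w * star w) := hw.isStarProjection_mul_star
    have hqp : w * star w * (u * star u) = w * star w :=
      hq.mul_eq_left_of_mul_mul_eq hp hwu.mul_star_sandwich_eq
    refine ⟨w * star w, hq, (le_final _ hq).mpr hqp, ?_⟩
    rw [huv.mul_eq_mul_of_mul_mul_star_eq hqp, hwu.mul_star_mul_eq]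

/-- In a von Neumann algebra, if `u ≤ v` in the tripotent order, the map `q ↦ q v` is an
order isomorphism from the projections `q ≤ u u*` onto the tripotents `w ≤ u`. -/
theorem interval_order_iso_final_projection
    {H : Type*} [NormedAddCommGroup H] [InnerProductSpace ℂ H] [CompleteSpace H]
    (M : VonNeumannAlgebra H) (u v : M.toStarSubalgebra)
    (hu : IsTripotent u) (hv : IsTripotent v) (huv : TripLe u v) :
    (∀ q : M.toStarSubalgebra, IsProjection q → q ≤ u * star u →
        IsTripotent (q * v) ∧ TripLe (q * v) u) ∧
    (∀ q q' : M.toStarSubalgebra, IsProjection q → q ≤ u * star u →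
        IsProjection q' → q' ≤ u * star u → (q ≤ q' ↔ TripLe (q * v) (q' * v))) ∧
    (∀ w : M.toStarSubalgebra, IsTripotent w → TripLe w u →
        ∃ q : M.toStarSubalgebra, IsProjection q ∧ q ≤ u * star u ∧ w = q * v) :=
  interval_order_iso_final_projection_general M u v hu huv
end

section
/- Let A, B be C*-algebras and Φ : A → B a bounded linear map such that Φ(u) is a partial isometry whenever u is a partial isometry, and A is a von Neumann algebra (so the spectral theorem is available). If e, f are orthogonal partial isometries in A (e* f = 0 = e f*), then Φ(e) and Φ(f) are orthogonal partial isometries in B. -/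
theorem IsIdempotentElem.mul_self_add_mul_self_eq {R : Type*} [Ring R] [IsAddTorsionFree R]
    {a s : R} (hadd : IsIdempotentElem (a + s)) (hsub : IsIdempotentElem (a - s)) :
    a * a + s * s = a := by
  refine nsmul_right_injective two_ne_zero ?_
  calc 2 • (a * a + s * s) = (a + s) * (a + s) + (a - s) * (a - s) := by noncomm_ring
    _ = (a + s) + (a - s) := by rw [hadd.eq, hsub.eq]
    _ = 2 • a := by abel

theorem IsStarProjection.mul_eq_zero_of_mul_add_mul_nonpos {R : Type*} [NonUnitalNormedRing R]
    [StarRing R] [CStarRing R] [PartialOrder R] [StarOrderedRing R] {p q : R}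
    (hp : IsStarProjection p) (hq : IsStarProjection q) (h : p * q + q * p ≤ 0) :
    p * q = 0 := by
  have hpqp : p * q * p = star (q * p) * (q * p) := by
    rw [star_mul, hp.isSelfAdjoint.star_eq, hq.isSelfAdjoint.star_eq,
      ← mul_assoc, mul_assoc p q q, hq.isIdempotentElem.eq]
  have hpqp_nonneg : 0 ≤ p * q * p := hpqp ▸ star_mul_self_nonneg (q * p)
  have htwice : p * q * p + p * q * p ≤ 0 := by
    calc p * q * p + p * q * p = p * p * q * p + p * q * (p * p) := by
          rw [hp.isIdempotentElem.eq]
      _ = p * (p * q + q * p) * p := by noncomm_ring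
      _ ≤ p * 0 * p := hp.isSelfAdjoint.conjugate_le_conjugate h
      _ = 0 := by rw [mul_zero, zero_mul]
  have hqp : q * p = 0 := by
    rw [← CStarRing.star_mul_self_eq_zero_iff, ← hpqp]
    exact le_antisymm ((le_add_of_nonneg_right hpqp_nonneg).trans htwice) hpqp_nonneg
  simpa [hp.isSelfAdjoint.star_eq, hq.isSelfAdjoint.star_eq] using congr(star $hqp)

namespace IsTripotent

section Ring

variable {R : Type*} [Ring R] [StarRing R] {u v : R}

protected theorem star (hu : IsTripotent u) : IsTripotent (star u) := by
  simpa [IsTripotent, star_mul, mul_assoc] using congr(star $hu)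

protected theorem neg (hu : IsTripotent u) : IsTripotent (-u) := by
  simpa [IsTripotent] using hu

theorem isStarProjection_mul_star_s8 (hu : IsTripotent u) : IsStarProjection (u * star u) where
  isIdempotentElem := by rw [IsIdempotentElem, ← mul_assoc, hu]
  isSelfAdjoint := by simp [IsSelfAdjoint, star_mul]

theorem add_of_orthogonal (hu : IsTripotent u) (hv : IsTripotent v)
    (h₁ : star u * v = 0) (h₂ : u * star v = 0) : IsTripotent (u + v) := by
  unfold IsTripotent at hu hv ⊢
  have h₃ : star v * u = 0 := by simpa using congr(star $h₁)
  have h₄ : v * star u = 0 := by simpa using congr(star $h₂)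
  calc (u + v) * star (u + v) * (u + v)
      = u * star u * u + v * star v * v + u * (star u * v) + u * star v * (u + v)
        + v * star u * (u + v) + v * (star v * u) := by rw [star_add]; noncomm_ring
    _ = u + v := by simp [hu, hv, h₁, h₂, h₃, h₄]

theorem sub_of_orthogonal (hu : IsTripotent u) (hv : IsTripotent v)
    (h₁ : star u * v = 0) (h₂ : u * star v = 0) : IsTripotent (u - v) := by
  simpa [sub_eq_add_neg] using hu.add_of_orthogonal hv.neg (by simp [h₁]) (by simp [h₂])

theorem star_mul_eq_zero_of_mul_star_mul_mul_star_eq_zero (hu : IsTripotent u)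
    (hv : IsTripotent v) (h : u * star u * (v * star v) = 0) : star u * v = 0 := by
  have hu' : star u * u * star u = star u := by simpa [IsTripotent] using hu.star
  calc star u * v = star u * u * star u * (v * star v * v) := by rw [hu', hv]
    _ = star u * (u * star u * (v * star v)) * v := by noncomm_ring
    _ = 0 := by rw [h, mul_zero, zero_mul]

end Ring

section CStarAlgebra

variable {B : Type*} [CStarAlgebra B] {u v : B}

theorem star_mul_eq_zero_of_add_of_sub (hu : IsTripotent u) (hv : IsTripotent v)
    (hadd : IsTripotent (u + v)) (hsub : IsTripotent (u - v)) : star u * v = 0 := by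
  let _ := CStarAlgebra.spectralOrder B
  have := CStarAlgebra.spectralOrderedRing B
  let _ : Module ℚ B := .compHom B (algebraMap ℚ ℂ)
  have : IsAddTorsionFree B := .of_module_rat B
  set p := u * star u
  set q := v * star v
  set s := u * star v + v * star u
  have hp := hu.isStarProjection_mul_star_s8
  have hq := hv.isStarProjection_mul_star_s8
  have hs : star s = s := by simp [s, star_mul, add_comm]
  have hsq : (p + q) * (p + q) + s * s = p + q := by
    refine IsIdempotentElem.mul_self_add_mul_self_eq ?_ ?_
    · convert hadd.isStarProjection_mul_star_s8.isIdempotentElem using 1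
      simp only [p, q, s, star_add]; noncomm_ring
    · convert hsub.isStarProjection_mul_star_s8.isIdempotentElem using 1
      simp only [p, q, s, star_sub]; noncomm_ring
  have hanti : p * q + q * p = -(star s * s) := by
    calc p * q + q * p = ((p + q) * (p + q) + s * s) - p * p - q * q - s * s := by noncomm_ring
      _ = -(star s * s) := by rw [hsq, hp.isIdempotentElem.eq, hq.isIdempotentElem.eq, hs]; abel
  refine hu.star_mul_eq_zero_of_mul_star_mul_mul_star_eq_zero hv ?_
  exact hp.mul_eq_zero_of_mul_add_mul_nonpos hq
    (hanti ▸ neg_nonpos.mpr (star_mul_self_nonneg s))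

theorem orthogonal_of_add_of_sub (hu : IsTripotent u) (hv : IsTripotent v)
    (hadd : IsTripotent (u + v)) (hsub : IsTripotent (u - v)) :
    star u * v = 0 ∧ u * star v = 0 := by
  refine ⟨hu.star_mul_eq_zero_of_add_of_sub hv hadd hsub, ?_⟩
  simpa using hu.star.star_mul_eq_zero_of_add_of_sub hv.star
    (by simpa using hadd.star) (by simpa using hsub.star)

end CStarAlgebra

end IsTripotent

/-- Let `A` be a von Neumann algebra and `B` a C*-algebra, and `Φ : A → B` a bounded
linear map sending partial isometries to partial isometries. If `e, f` are orthogonal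
partial isometries in `A`, then `Φ e, Φ f` are orthogonal partial isometries in `B`. -/
theorem bounded_tripotent_preserving_map_preserves_orthogonality
    {H : Type*} [NormedAddCommGroup H] [InnerProductSpace ℂ H] [CompleteSpace H]
    (M : VonNeumannAlgebra H)
    {B : Type*} [NormedRing B] [StarRing B] [CStarRing B]
    [NormedAlgebra ℂ B] [StarModule ℂ B] [CompleteSpace B]
    (Φ : M.toStarSubalgebra →L[ℂ] B)
    (hΦ : ∀ u : M.toStarSubalgebra, IsTripotent u → IsTripotent (Φ u))
    (e f : M.toStarSubalgebra) (he : IsTripotent e) (hf : IsTripotent f)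
    (horth : star e * f = 0 ∧ e * star f = 0) :
    IsTripotent (Φ e) ∧ IsTripotent (Φ f) ∧
      star (Φ e) * Φ f = 0 ∧ Φ e * star (Φ f) = 0 := by
  let _ : CStarAlgebra B := {}
  obtain ⟨h₁, h₂⟩ := horth
  have hadd : IsTripotent (Φ e + Φ f) := map_add Φ e f ▸ hΦ _ (he.add_of_orthogonal hf h₁ h₂)
  have hsub : IsTripotent (Φ e - Φ f) := map_sub Φ e f ▸ hΦ _ (he.sub_of_orthogonal hf h₁ h₂)
  exact ⟨hΦ e he, hΦ f hf, (hΦ e he).orthogonal_of_add_of_sub (hΦ f hf) hadd hsub⟩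
end
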